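/- For β ∈ [0,1) and ε > 0, the smooth function v^ε(z₁,z₂) = c₂(1-β)^{-1}(|z₂|² + ε)^{1/2}((|z₁|² + ε)^{β/2} + (|z₁|² + ε)^{1-β/2}) on ℂ² (with c₂ = 2^{3/2} for n = 2, i.e. K = 2/(1-β) after normalization) has positive semidefinite complex Hessian; in particular v^ε is plurisubharmonic on ℂ². -/

import Mathlib

open scoped ComplexOrder

/-- Wirtinger derivative `∂/∂z₁`. -/
noncomputable def wd1 (f : ℂ × ℂ → ℂ) (z : ℂ × ℂ) : ℂ :=
  (fderiv ℝ f z (1, 0) - Complex.I * fderiv ℝ f z (Complex.I, 0)) / 2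

/-- Wirtinger derivative `∂/∂z̄₁`. -/
noncomputable def wd1b (f : ℂ × ℂ → ℂ) (z : ℂ × ℂ) : ℂ :=
  (fderiv ℝ f z (1, 0) + Complex.I * fderiv ℝ f z (Complex.I, 0)) / 2

/-- Wirtinger derivative `∂/∂z₂`. -/
noncomputable def wd2 (f : ℂ × ℂ → ℂ) (z : ℂ × ℂ) : ℂ :=
  (fderiv ℝ f z (0, 1) - Complex.I * fderiv ℝ f z (0, Complex.I)) / 2

/-- Wirtinger derivative `∂/∂z̄₂`. -/
noncomputable def wd2b (f : ℂ × ℂ → ℂ) (z : ℂ × ℂ) : ℂ :=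
  (fderiv ℝ f z (0, 1) + Complex.I * fderiv ℝ f z (0, Complex.I)) / 2

/-- The complex Hessian `(u_{i j̄})` of `f` at `z`. -/
noncomputable def cHess (f : ℂ × ℂ → ℂ) (z : ℂ × ℂ) : Matrix (Fin 2) (Fin 2) ℂ :=
  !![wd1 (wd1b f) z, wd1 (wd2b f) z; wd2 (wd1b f) z, wd2 (wd2b f) z]

/-- `v^ε(z₁,z₂) = (2/(1-β)) √(|z₂|²+ε) ((|z₁|²+ε)^{β/2} + (|z₁|²+ε)^{1-β/2})`. -/
noncomputable def vE (β ε : ℝ) (z : ℂ × ℂ) : ℝ :=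
  (2 / (1 - β)) * Real.sqrt (‖z.2‖ ^ 2 + ε) *
    ((‖z.1‖ ^ 2 + ε) ^ (β / 2) + (‖z.1‖ ^ 2 + ε) ^ (1 - β / 2))

/-! Write `v^ε(w) = g(|w₂|²) h(|w₁|²)`. For such a product the complex Hessian is
`!![g (h' + h'' t₁), g' h' z̄₁ z₂; g' h' z₁ z̄₂, h (g' + g'' t₂)]` with `tᵢ = |zᵢ|²`, so it is
positive semidefinite as soon as each factor `φ ∈ {g, h}` is positive with
`φ'² t ≤ φ (φ' + φ'' t)`, i.e. `s ↦ log φ (exp s)` is convex: the diagonal is then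
nonnegative and the product of the diagonal entries dominates `(g' h')² t₁ t₂`. This condition
holds for `(t + ε) ^ p` with `p ≥ 0` and is stable under positive multiples and sums, which covers
`g = C √(t + ε)` and `h = (t + ε) ^ (β/2) + (t + ε) ^ (1 - β/2)`. -/

open Complex ComplexConjugate ContinuousLinearMap
open scoped Matrix

/-- The real differential `v ↦ 2 Re (ā v₁ + b̄ v₂)` of a real function with
`(∂/∂z̄₁, ∂/∂z̄₂) = (a, b)`. -/
noncomputable def wirtingerDiff (a b : ℂ) : ℂ × ℂ →L[ℝ] ℝ :=
  (2 : ℝ) • reCLM.comp ((conj a) • fst ℝ ℂ ℂ + (conj b) • snd ℝ ℂ ℂ)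

@[simp]
lemma wirtingerDiff_apply (a b : ℂ) (v : ℂ × ℂ) :
    wirtingerDiff a b v = 2 * (conj a * v.1 + conj b * v.2).re := by
  simp [wirtingerDiff]
  ring

def HasWirtingerGradAt (u : ℂ × ℂ → ℝ) (a b : ℂ) (z : ℂ × ℂ) : Prop :=
  HasFDerivAt u (wirtingerDiff a b) z

lemma hasWirtingerGradAt_norm_fst_sq (z : ℂ × ℂ) :
    HasWirtingerGradAt (fun w => ‖w.1‖ ^ 2) z.1 0 z := by
  refine (hasFDerivAt_fst (𝕜 := ℝ)).norm_sq.congr_fderiv ?_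
  ext v <;> simp [Complex.inner]
  ring

lemma hasWirtingerGradAt_norm_snd_sq (z : ℂ × ℂ) :
    HasWirtingerGradAt (fun w => ‖w.2‖ ^ 2) 0 z.2 z := by
  refine (hasFDerivAt_snd (𝕜 := ℝ)).norm_sq.congr_fderiv ?_
  ext v <;> simp [Complex.inner]
  ring

namespace HasWirtingerGradAt

variable {u v : ℂ × ℂ → ℝ} {a b c d : ℂ} {z : ℂ × ℂ}

lemma _root_.HasDerivAt.comp_hasWirtingerGradAt {φ : ℝ → ℝ} {φ' : ℝ}
    (hφ : HasDerivAt φ φ' (u z)) (hu : HasWirtingerGradAt u a b z) :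
    HasWirtingerGradAt (fun w => φ (u w)) (φ' * a) (φ' * b) z := by
  refine (hφ.comp_hasFDerivAt z hu).congr_fderiv ?_
  ext w <;> simp <;> ring

lemma mul (hu : HasWirtingerGradAt u a b z) (hv : HasWirtingerGradAt v c d z) :
    HasWirtingerGradAt (fun w => u w * v w) (u z * c + v z * a) (u z * d + v z * b) z := by
  refine (HasFDerivAt.mul hu hv).congr_fderiv ?_
  ext w <;> simp <;> ring

lemma hasFDerivAt_ofReal (hu : HasWirtingerGradAt u a b z) :
    HasFDerivAt (fun w => (u w : ℂ)) (ofRealCLM.comp (wirtingerDiff a b)) z :=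
  ofRealCLM.hasFDerivAt.comp z hu

lemma wd1b_ofReal (hu : HasWirtingerGradAt u a b z) : wd1b (fun w => (u w : ℂ)) z = a := by
  rw [wd1b, hu.hasFDerivAt_ofReal.fderiv]
  apply Complex.ext <;> simp

lemma wd2b_ofReal (hu : HasWirtingerGradAt u a b z) : wd2b (fun w => (u w : ℂ)) z = b := by
  rw [wd2b, hu.hasFDerivAt_ofReal.fderiv]
  apply Complex.ext <;> simp

lemma wd1_ofReal_mul_fst (hu : HasWirtingerGradAt u a b z) :
    wd1 (fun w => (u w : ℂ) * w.1) z = u z + conj a * z.1 := by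
  have h : HasFDerivAt (fun w => (u w : ℂ) * w.1) _ z :=
    hu.hasFDerivAt_ofReal.mul (hasFDerivAt_fst (𝕜 := ℝ))
  rw [wd1, h.fderiv]
  apply Complex.ext <;> simp <;> ring

lemma wd2_ofReal_mul_fst (hu : HasWirtingerGradAt u a b z) :
    wd2 (fun w => (u w : ℂ) * w.1) z = conj b * z.1 := by
  have h : HasFDerivAt (fun w => (u w : ℂ) * w.1) _ z :=
    hu.hasFDerivAt_ofReal.mul (hasFDerivAt_fst (𝕜 := ℝ))
  rw [wd2, h.fderiv]
  apply Complex.ext <;> simp <;> ring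

lemma wd1_ofReal_mul_snd (hu : HasWirtingerGradAt u a b z) :
    wd1 (fun w => (u w : ℂ) * w.2) z = conj a * z.2 := by
  have h : HasFDerivAt (fun w => (u w : ℂ) * w.2) _ z :=
    hu.hasFDerivAt_ofReal.mul (hasFDerivAt_snd (𝕜 := ℝ))
  rw [wd1, h.fderiv]
  apply Complex.ext <;> simp <;> ring

lemma wd2_ofReal_mul_snd (hu : HasWirtingerGradAt u a b z) :
    wd2 (fun w => (u w : ℂ) * w.2) z = u z + conj b * z.2 := by
  have h : HasFDerivAt (fun w => (u w : ℂ) * w.2) _ z :=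
    hu.hasFDerivAt_ofReal.mul (hasFDerivAt_snd (𝕜 := ℝ))
  rw [wd2, h.fderiv]
  apply Complex.ext <;> simp <;> ring

end HasWirtingerGradAt

lemma posSemidef_fin_two_of_sq_norm_le {A D : ℝ} {w : ℂ} (hA : 0 ≤ A) (hD : 0 ≤ D)
    (hw : ‖w‖ ^ 2 ≤ A * D) : !![(A : ℂ), conj w; w, (D : ℂ)].PosSemidef := by
  rw [Matrix.posSemidef_iff_dotProduct_mulVec]
  refine ⟨?_, fun x => ?_⟩
  · ext i j
    fin_cases i <;> fin_cases j <;> simp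
  · have hform : star x ⬝ᵥ !![(A : ℂ), conj w; w, (D : ℂ)] *ᵥ x =
        ((A * ‖x 0‖ ^ 2 + D * ‖x 1‖ ^ 2 + 2 * (w * x 0 * conj (x 1)).re : ℝ) : ℂ) := by
      apply Complex.ext <;>
        simp [Matrix.mulVec, dotProduct, Fin.sum_univ_two, Complex.sq_norm, normSq_apply] <;> ring
    have hcross : |(w * x 0 * conj (x 1)).re| ≤ ‖w‖ * ‖x 0‖ * ‖x 1‖ := by
      simpa using abs_re_le_norm (w * x 0 * conj (x 1))
    have hAM : 2 * (‖w‖ * ‖x 0‖ * ‖x 1‖) ≤ A * ‖x 0‖ ^ 2 + D * ‖x 1‖ ^ 2 := by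
      refine (pow_le_pow_iff_left₀ (by positivity) (by positivity) two_ne_zero).1 ?_
      nlinarith [sq_nonneg (A * ‖x 0‖ ^ 2 - D * ‖x 1‖ ^ 2),
        mul_le_mul_of_nonneg_right hw (by positivity : 0 ≤ ‖x 0‖ ^ 2 * ‖x 1‖ ^ 2)]
    rw [hform, zero_le_real]
    linarith [abs_le.1 hcross]

/-- `φ` with its first two derivatives on `[0, ∞)`, positive, and with `s ↦ log φ (exp s)` convex
(for `t = exp s` this is the last field times `t`), i.e. `w ↦ log φ (‖w‖²)` subharmonic on `ℂ`. -/
structure IsLogConvexProfile (φ φ' φ'' : ℝ → ℝ) : Prop where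
  hasDerivAt : ∀ t, 0 ≤ t → HasDerivAt φ (φ' t) t
  hasDerivAt_deriv : ∀ t, 0 ≤ t → HasDerivAt φ' (φ'' t) t
  pos : ∀ t, 0 ≤ t → 0 < φ t
  sq_deriv_mul_le : ∀ t, 0 ≤ t → φ' t ^ 2 * t ≤ φ t * (φ' t + φ'' t * t)

lemma IsLogConvexProfile.deriv_add_mul_nonneg {φ φ' φ'' : ℝ → ℝ}
    (hφ : IsLogConvexProfile φ φ' φ'') {t : ℝ} (ht : 0 ≤ t) : 0 ≤ φ' t + φ'' t * t :=
  (mul_nonneg_iff_of_pos_left (hφ.pos t ht)).1 <|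
    (mul_nonneg (sq_nonneg _) ht).trans (hφ.sq_deriv_mul_le t ht)

/-- Sedrakyan's inequality `(D₁ + D₂)² / (P₁ + P₂) ≤ D₁² / P₁ + D₂² / P₂`, denominators cleared. -/
lemma sq_add_mul_le_add_mul_add {P₁ P₂ D₁ D₂ E₁ E₂ t : ℝ} (hP₁ : 0 < P₁) (hP₂ : 0 < P₂)
    (ht : 0 ≤ t) (h₁ : D₁ ^ 2 * t ≤ P₁ * E₁) (h₂ : D₂ ^ 2 * t ≤ P₂ * E₂) :
    (D₁ + D₂) ^ 2 * t ≤ (P₁ + P₂) * (E₁ + E₂) := by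
  have key : P₁ * P₂ * ((P₁ + P₂) * (E₁ + E₂) - (D₁ + D₂) ^ 2 * t) =
      P₂ * (P₁ + P₂) * (P₁ * E₁ - D₁ ^ 2 * t) + P₁ * (P₁ + P₂) * (P₂ * E₂ - D₂ ^ 2 * t) +
        t * (D₁ * P₂ - D₂ * P₁) ^ 2 := by ring
  have hkey : 0 ≤ P₁ * P₂ * ((P₁ + P₂) * (E₁ + E₂) - (D₁ + D₂) ^ 2 * t) := by
    rw [key]
    have := sub_nonneg.2 h₁
    have := sub_nonneg.2 h₂
    positivity
  linarith [(mul_nonneg_iff_of_pos_left (mul_pos hP₁ hP₂)).1 hkey]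

namespace IsLogConvexProfile

variable {φ φ' φ'' ψ ψ' ψ'' : ℝ → ℝ}

lemma const_mul (hφ : IsLogConvexProfile φ φ' φ'') {C : ℝ} (hC : 0 < C) :
    IsLogConvexProfile (fun x => C * φ x) (fun x => C * φ' x) (fun x => C * φ'' x) where
  hasDerivAt t ht := (hφ.hasDerivAt t ht).const_mul C
  hasDerivAt_deriv t ht := (hφ.hasDerivAt_deriv t ht).const_mul C
  pos t ht := mul_pos hC (hφ.pos t ht)
  sq_deriv_mul_le t ht := by
    nlinarith [mul_le_mul_of_nonneg_left (hφ.sq_deriv_mul_le t ht) (sq_nonneg C)]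

lemma add (hφ : IsLogConvexProfile φ φ' φ'') (hψ : IsLogConvexProfile ψ ψ' ψ'') :
    IsLogConvexProfile (fun x => φ x + ψ x) (fun x => φ' x + ψ' x)
      (fun x => φ'' x + ψ'' x) where
  hasDerivAt t ht := (hφ.hasDerivAt t ht).add (hψ.hasDerivAt t ht)
  hasDerivAt_deriv t ht := (hφ.hasDerivAt_deriv t ht).add (hψ.hasDerivAt_deriv t ht)
  pos t ht := add_pos (hφ.pos t ht) (hψ.pos t ht)
  sq_deriv_mul_le t ht := by
    convert sq_add_mul_le_add_mul_add (hφ.pos t ht) (hψ.pos t ht) ht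
      (hφ.sq_deriv_mul_le t ht) (hψ.sq_deriv_mul_le t ht) using 2
    ring

end IsLogConvexProfile

lemma isLogConvexProfile_add_const_rpow {ε p : ℝ} (hε : 0 < ε) (hp : 0 ≤ p) :
    IsLogConvexProfile (fun x => (x + ε) ^ p) (fun x => p * (x + ε) ^ (p - 1))
      (fun x => p * (p - 1) * (x + ε) ^ (p - 2)) := by
  have hs : ∀ t : ℝ, 0 ≤ t → 0 < t + ε := fun t ht => by linarith
  refine ⟨fun t ht => ?_, fun t ht => ?_, fun t ht => Real.rpow_pos_of_pos (hs t ht) p,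
    fun t ht => ?_⟩
  · exact (Real.hasDerivAt_rpow_const (Or.inl (hs t ht).ne')).comp_add_const t ε
  · have := ((Real.hasDerivAt_rpow_const (p := p - 1) (Or.inl (hs t ht).ne')).comp_add_const
      t ε).const_mul p
    refine this.congr_deriv ?_
    rw [show p - 1 - 1 = p - 2 by ring]
    ring
  · have hp₁ : (t + ε) ^ p = (t + ε) ^ (p - 1) * (t + ε) := by
      rw [← Real.rpow_add_one (hs t ht).ne']
      ring_nf
    have hp₂ : (t + ε) ^ (p - 2) * (t + ε) = (t + ε) ^ (p - 1) := by
      rw [← Real.rpow_add_one (hs t ht).ne']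
      ring_nf
    have hexcess : (t + ε) ^ (p - 1) * (t + ε) *
        (p * (t + ε) ^ (p - 1) + p * (p - 1) * (t + ε) ^ (p - 2) * t) =
        (p * (t + ε) ^ (p - 1)) ^ 2 * t + p * ((t + ε) ^ (p - 1)) ^ 2 * ε := by
      linear_combination p * (p - 1) * (t + ε) ^ (p - 1) * t * hp₂
    rw [hp₁, hexcess]
    exact le_add_of_nonneg_right (by positivity)

noncomputable def radialProduct (g h : ℝ → ℝ) (w : ℂ × ℂ) : ℝ := g (‖w.2‖ ^ 2) * h (‖w.1‖ ^ 2)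

section RadialProduct

variable {g g' g'' h h' h'' : ℝ → ℝ}

lemma hasWirtingerGradAt_radialProduct {z : ℂ × ℂ}
    (hg : HasDerivAt g (g' (‖z.2‖ ^ 2)) (‖z.2‖ ^ 2))
    (hh : HasDerivAt h (h' (‖z.1‖ ^ 2)) (‖z.1‖ ^ 2)) :
    HasWirtingerGradAt (radialProduct g h)
      (radialProduct g h' z * z.1) (radialProduct g' h z * z.2) z := by
  unfold radialProduct
  convert (hg.comp_hasWirtingerGradAt (hasWirtingerGradAt_norm_snd_sq z)).mul
    (hh.comp_hasWirtingerGradAt (hasWirtingerGradAt_norm_fst_sq z)) using 1 <;>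
    push_cast <;> ring

lemma wd1b_radialProduct (hg : ∀ x, 0 ≤ x → HasDerivAt g (g' x) x)
    (hh : ∀ x, 0 ≤ x → HasDerivAt h (h' x) x) :
    wd1b (fun w => (radialProduct g h w : ℂ)) = fun w => (radialProduct g h' w : ℂ) * w.1 :=
  funext fun _ =>
    (hasWirtingerGradAt_radialProduct (hg _ (sq_nonneg _)) (hh _ (sq_nonneg _))).wd1b_ofReal

lemma wd2b_radialProduct (hg : ∀ x, 0 ≤ x → HasDerivAt g (g' x) x)
    (hh : ∀ x, 0 ≤ x → HasDerivAt h (h' x) x) :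
    wd2b (fun w => (radialProduct g h w : ℂ)) = fun w => (radialProduct g' h w : ℂ) * w.2 :=
  funext fun _ =>
    (hasWirtingerGradAt_radialProduct (hg _ (sq_nonneg _)) (hh _ (sq_nonneg _))).wd2b_ofReal

lemma cHess_radialProduct
    (hg : ∀ x, 0 ≤ x → HasDerivAt g (g' x) x) (hg' : ∀ x, 0 ≤ x → HasDerivAt g' (g'' x) x)
    (hh : ∀ x, 0 ≤ x → HasDerivAt h (h' x) x) (hh' : ∀ x, 0 ≤ x → HasDerivAt h' (h'' x) x)
    (z : ℂ × ℂ) :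
    cHess (fun w => (radialProduct g h w : ℂ)) z =
      !![((g (‖z.2‖ ^ 2) * (h' (‖z.1‖ ^ 2) + h'' (‖z.1‖ ^ 2) * ‖z.1‖ ^ 2) : ℝ) : ℂ),
          conj (((g' (‖z.2‖ ^ 2) * h' (‖z.1‖ ^ 2) : ℝ) : ℂ) * z.1 * conj z.2);
        ((g' (‖z.2‖ ^ 2) * h' (‖z.1‖ ^ 2) : ℝ) : ℂ) * z.1 * conj z.2,
          ((h (‖z.1‖ ^ 2) * (g' (‖z.2‖ ^ 2) + g'' (‖z.2‖ ^ 2) * ‖z.2‖ ^ 2) : ℝ) : ℂ)] := by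
  have h₁ := hasWirtingerGradAt_radialProduct (z := z) (hg _ (sq_nonneg _)) (hh' _ (sq_nonneg _))
  have h₂ := hasWirtingerGradAt_radialProduct (z := z) (hg' _ (sq_nonneg _)) (hh _ (sq_nonneg _))
  rw [cHess, wd1b_radialProduct hg hh, wd2b_radialProduct hg hh, h₁.wd1_ofReal_mul_fst,
    h₁.wd2_ofReal_mul_fst, h₂.wd1_ofReal_mul_snd, h₂.wd2_ofReal_mul_snd]
  have hn₁ : (‖z.1‖ : ℂ) ^ 2 = conj z.1 * z.1 := (Complex.conj_mul' z.1).symm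
  have hn₂ : (‖z.2‖ : ℂ) ^ 2 = conj z.2 * z.2 := (Complex.conj_mul' z.2).symm
  ext i j
  fin_cases i <;> fin_cases j <;> simp [radialProduct, hn₁, hn₂] <;> ring

lemma posSemidef_cHess_radialProduct (hg : IsLogConvexProfile g g' g'')
    (hh : IsLogConvexProfile h h' h'') (z : ℂ × ℂ) :
    (cHess (fun w => (radialProduct g h w : ℂ)) z).PosSemidef := by
  rw [cHess_radialProduct hg.hasDerivAt hg.hasDerivAt_deriv hh.hasDerivAt hh.hasDerivAt_deriv]
  have ht₁ := sq_nonneg ‖z.1‖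
  have ht₂ := sq_nonneg ‖z.2‖
  refine posSemidef_fin_two_of_sq_norm_le
    (mul_nonneg (hg.pos _ ht₂).le (hh.deriv_add_mul_nonneg ht₁))
    (mul_nonneg (hh.pos _ ht₁).le (hg.deriv_add_mul_nonneg ht₂)) ?_
  calc ‖((g' (‖z.2‖ ^ 2) * h' (‖z.1‖ ^ 2) : ℝ) : ℂ) * z.1 * conj z.2‖ ^ 2
      = (g' (‖z.2‖ ^ 2) ^ 2 * ‖z.2‖ ^ 2) * (h' (‖z.1‖ ^ 2) ^ 2 * ‖z.1‖ ^ 2) := by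
        simp only [norm_mul, Complex.norm_real, Real.norm_eq_abs, RCLike.norm_conj, mul_pow,
          sq_abs]
        ring
    _ ≤ (g (‖z.2‖ ^ 2) * (g' (‖z.2‖ ^ 2) + g'' (‖z.2‖ ^ 2) * ‖z.2‖ ^ 2)) *
          (h (‖z.1‖ ^ 2) * (h' (‖z.1‖ ^ 2) + h'' (‖z.1‖ ^ 2) * ‖z.1‖ ^ 2)) :=
        mul_le_mul (hg.sq_deriv_mul_le _ ht₂) (hh.sq_deriv_mul_le _ ht₁) (by positivity)
          (mul_nonneg (hg.pos _ ht₂).le (hg.deriv_add_mul_nonneg ht₂))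
    _ = _ := by ring

end RadialProduct

theorem cHess_vE_posSemidef (β : ℝ) (hβ : β ∈ Set.Ico (0 : ℝ) 1) (ε : ℝ) (hε : 0 < ε)
    (z : ℂ × ℂ) :
    (cHess (fun w => ((vE β ε w : ℝ) : ℂ)) z).PosSemidef := by
  obtain ⟨hβ₀, hβ₁⟩ := hβ
  have hvE : vE β ε = radialProduct (fun x => 2 / (1 - β) * (x + ε) ^ (1 / 2 : ℝ))
      (fun x => (x + ε) ^ (β / 2) + (x + ε) ^ (1 - β / 2)) := by
    funext w
    rw [vE, radialProduct, Real.sqrt_eq_rpow]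
  have hg := (isLogConvexProfile_add_const_rpow hε (by norm_num : (0 : ℝ) ≤ 1 / 2)).const_mul
    (div_pos two_pos (sub_pos.2 hβ₁))
  have hh := (isLogConvexProfile_add_const_rpow hε (by linarith : 0 ≤ β / 2)).add
    (isLogConvexProfile_add_const_rpow hε (by linarith : 0 ≤ 1 - β / 2))
  rw [hvE]
  exact posSemidef_cHess_radialProduct hg hh z
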